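/- Let b : 𝕋^d × ℝ^r → ℝ^r be a trigonometric polynomial in α with zero average, [b(·, β₀)]₀ = 0, depending C¹ on β₀, and suppose b satisfies the range equation (ω·∂_α)² b(α,β₀) + ε(∂_β f(α, β₀ + b(α,β₀)) − [∂_β f(·, β₀ + b(·,β₀))]₀) = 0 for all α. Define L(β₀) := [ −(1/2)|ω·∂_α b(α,β₀)|² + ε f(α, β₀ + b(α,β₀)) ]₀ (average over α ∈ 𝕋^d). Then ∂_{β₀} L(β₀) = [ε ∂_β f(·, β₀ + b(·,β₀))]₀, i.e. the averaged force equals the gradient of the averaged Lagrangian. -/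

import Mathlib

open MeasureTheory Real
open scoped BigOperators

/-- Average over the torus: `[g]₀ = (2π)^{-d} ∫_{[0,2π]^d} g(α) dα`. -/
noncomputable def torusAvg {d : ℕ} (g : (Fin d → ℝ) → ℝ) : ℝ :=
  ((2 * π) ^ d : ℝ)⁻¹ *
    ∫ α in Set.univ.pi fun _ : Fin d => Set.Ioc (0 : ℝ) (2 * π), g α

/-- Directional derivative `(ω·∂_α) g` of a function of `α`. -/
noncomputable def dirDeriv {d : ℕ} (ω : Fin d → ℝ) (g : (Fin d → ℝ) → ℝ)
    (α : Fin d → ℝ) : ℝ :=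
  fderiv ℝ g α ω

/-- `j`-th component of the gradient `∂_β f(α,β)`. -/
noncomputable def gradBeta {d r : ℕ} (f : (Fin d → ℝ) → (Fin r → ℝ) → ℝ)
    (j : Fin r) (α : Fin d → ℝ) (β : Fin r → ℝ) : ℝ :=
  fderiv ℝ (f α) β (Pi.single j 1 : Fin r → ℝ)

noncomputable section Aux15

variable {d r : ℕ}

/-- the fundamental box -/
def box15 (d : ℕ) : Set (Fin d → ℝ) :=
  Set.univ.pi fun _ : Fin d => Set.Ioc (0 : ℝ) (2 * π)

lemma box15_meas : MeasurableSet (box15 d) :=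
  MeasurableSet.univ_pi fun _ => measurableSet_Ioc

lemma box15_subset_Icc :
    box15 d ⊆ Set.Icc (0 : Fin d → ℝ) (fun _ => 2 * π) := by
  rw [← Set.pi_univ_Icc]
  exact Set.pi_mono fun i _ => Set.Ioc_subset_Icc_self

lemma box15_vol_lt_top : volume (box15 d) < ⊤ :=
  lt_of_le_of_lt (measure_mono box15_subset_Icc) isCompact_Icc.measure_lt_top

lemma intOn15 {F : Type*} [NormedAddCommGroup F] {g : (Fin d → ℝ) → F}
    (hg : Continuous g) : IntegrableOn g (box15 d) :=
  (hg.continuousOn.integrableOn_compact isCompact_Icc).mono_set box15_subset_Icc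

/-- fderiv of a shifted function -/
lemma fderiv_shift15 {E : Type*} [NormedAddCommGroup E] [NormedSpace ℝ E]
    {H : E → ℝ} (h : Differentiable ℝ H) (c x : E) :
    fderiv ℝ (fun y => H (y + c)) x = fderiv ℝ H (x + c) := by
  have h1 : HasFDerivAt (fun y : E => y + c) (ContinuousLinearMap.id ℝ E) x :=
    (hasFDerivAt_id x).add_const c
  have := ((h (x + c)).hasFDerivAt.comp x h1).fderiv
  simpa [Function.comp_def] using this

variable {E F G : Type*} [NormedAddCommGroup E] [NormedSpace ℝ E]
  [NormedAddCommGroup F] [NormedSpace ℝ F] [NormedAddCommGroup G] [NormedSpace ℝ G]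

lemma fderiv_partial_fst {H : E × F → G} (h : Differentiable ℝ H) (a : E) (b : F) (v : E) :
    fderiv ℝ (fun x => H (x, b)) a v = fderiv ℝ H (a, b) (v, 0) := by
  have h1 : HasFDerivAt (fun x : E => H (x, b))
      ((fderiv ℝ H (a, b)).comp (ContinuousLinearMap.inl ℝ E F)) a :=
    (h (a, b)).hasFDerivAt.comp a (hasFDerivAt_prodMk_left a b)
  rw [h1.fderiv]; rfl

lemma fderiv_partial_snd {H : E × F → G} (h : Differentiable ℝ H) (a : E) (b : F) (v : F) :
    fderiv ℝ (fun y => H (a, y)) b v = fderiv ℝ H (a, b) (0, v) := by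
  have h1 : HasFDerivAt (fun y : F => H (a, y))
      ((fderiv ℝ H (a, b)).comp (ContinuousLinearMap.inr ℝ E F)) b :=
    (h (a, b)).hasFDerivAt.comp b (hasFDerivAt_prodMk_right a b)
  rw [h1.fderiv]; rfl

/-- mixed second derivative via the apply-CLM -/
lemma fderiv_fderiv_apply {H : E → ℝ} (h : Differentiable ℝ (fderiv ℝ H)) (x u v : E) :
    fderiv ℝ (fun p => fderiv ℝ H p u) x v = fderiv ℝ (fderiv ℝ H) x v u := by
  have h1 : HasFDerivAt (fun p => fderiv ℝ H p u)
      ((ContinuousLinearMap.apply ℝ ℝ u).comp (fderiv ℝ (fderiv ℝ H) x)) x :=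
    (ContinuousLinearMap.apply ℝ ℝ u).hasFDerivAt.comp x (h x).hasFDerivAt
  rw [h1.fderiv]; rfl

-- single-direction version
lemma integral_box_fderiv_single {u : (Fin d → ℝ) → ℝ} (hu : ContDiff ℝ 2 u)
    (hper : ∀ (α : Fin d → ℝ) (i : Fin d), u (α + (2 * π) • (Pi.single i 1 : Fin d → ℝ)) = u α)
    (i : Fin d) :
    ∫ α in box15 d, fderiv ℝ u α (Pi.single i 1) = 0 := by
  obtain ⟨n, rfl⟩ : ∃ n, d = n + 1 := ⟨d - 1, by have := i.pos; omega⟩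
  set g : (Fin (n + 1) → ℝ) → ℝ := fun α => fderiv ℝ u α (Pi.single i 1) with hg
  have hcont : Continuous g := by
    have h1 : Continuous (fderiv ℝ u) :=
      (hu.fderiv_right (m := 1) (by norm_num)).continuous
    exact h1.clm_apply continuous_const
  set e := MeasurableEquiv.piFinSuccAbove (fun _ : Fin (n + 1) => ℝ) i with he
  have hmp : MeasurePreserving e.symm volume volume :=
    (volume_preserving_piFinSuccAbove (fun _ : Fin (n + 1) => ℝ) i).symm
  have hsymm : ∀ p : ℝ × (Fin n → ℝ), e.symm p = i.insertNth p.1 p.2 := fun p => rfl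
  have key : (∫ α in box15 (n + 1), g α) =
      ∫ p in (Set.Ioc (0:ℝ) (2*π)) ×ˢ (box15 n), g (i.insertNth p.1 p.2) := by
    rw [← integral_indicator box15_meas,
      ← hmp.integral_comp e.symm.measurableEmbedding, ← integral_indicator
        (measurableSet_Ioc.prod box15_meas)]
    congr 1
    funext p
    have hmem : e.symm p ∈ box15 (n+1) ↔ p ∈ (Set.Ioc (0:ℝ) (2*π)) ×ˢ (box15 n) := by
      rw [hsymm]
      simp only [box15, Set.mem_pi, Set.mem_univ, forall_true_left, Set.mem_prod]
      rw [Fin.forall_iff_succAbove i]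
      simp [Fin.insertNth_apply_same, Fin.insertNth_apply_succAbove]
    by_cases h : e.symm p ∈ box15 (n+1)
    · rw [Set.indicator_of_mem h, Set.indicator_of_mem (hmem.1 h), hsymm]
    · rw [Set.indicator_of_notMem h, Set.indicator_of_notMem (fun hc => h (hmem.2 hc))]
  rw [key]
  have hic : Continuous (fun p : ℝ × (Fin n → ℝ) => (i.insertNth p.1 p.2 : Fin (n+1) → ℝ)) :=
    Continuous.finInsertNth i (continuous_fst : Continuous fun p : ℝ × (Fin n → ℝ) => p.1) continuous_snd
  have hconti : Continuous (fun p : ℝ × (Fin n → ℝ) => g (i.insertNth p.1 p.2)) :=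
    hcont.comp hic
  have hsub : (Set.Ioc (0:ℝ) (2*π)) ×ˢ (box15 n) ⊆
      (Set.Icc (0:ℝ) (2*π)) ×ˢ (Set.Icc (0 : Fin n → ℝ) (fun _ => 2*π)) :=
    Set.prod_mono Set.Ioc_subset_Icc_self box15_subset_Icc
  have hint : IntegrableOn (fun p : ℝ × (Fin n → ℝ) => g (i.insertNth p.1 p.2))
      ((Set.Ioc (0:ℝ) (2*π)) ×ˢ (box15 n)) :=
    ((hconti.continuousOn.integrableOn_compact
      (isCompact_Icc.prod isCompact_Icc)).mono_set hsub)
  have hint2 : Integrable (fun p : ℝ × (Fin n → ℝ) => g (i.insertNth p.1 p.2))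
      ((volume.restrict (Set.Ioc (0:ℝ) (2*π))).prod (volume.restrict (box15 n))) := by
    rw [Measure.prod_restrict]
    rwa [← Measure.volume_eq_prod]
  rw [Measure.volume_eq_prod, ← Measure.prod_restrict, integral_prod_symm _ hint2]
  have hinner : ∀ y : Fin n → ℝ,
      (∫ t in Set.Ioc (0:ℝ) (2*π), g (i.insertNth t y)) = 0 := by
    intro y
    have h0 : (0:ℝ) ≤ 2*π := by positivity
    have haff : ∀ t : ℝ,
        i.insertNth t y = i.insertNth 0 y + t • (Pi.single i 1 : Fin (n+1) → ℝ) := by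
      intro t; funext k
      by_cases hk : k = i
      · subst hk; simp
      · obtain ⟨l, rfl⟩ := Fin.exists_succAbove_eq hk
        simp [Pi.single_eq_of_ne (Fin.succAbove_ne i l)]
    rw [← intervalIntegral.integral_of_le h0]
    have hder : ∀ t ∈ Set.uIcc (0:ℝ) (2*π),
        HasDerivAt (fun t => u (i.insertNth t y)) (g (i.insertNth t y)) t := by
      intro t _
      have h1 : HasDerivAt
          (fun t : ℝ => i.insertNth 0 y + t • (Pi.single i 1 : Fin (n+1) → ℝ))
          (Pi.single i 1) t := by
        simpa using ((hasDerivAt_id t).smul_const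
          (Pi.single i 1 : Fin (n+1) → ℝ)).const_add (i.insertNth 0 y)
      have h2 := ((hu.differentiable (by norm_num)) _).hasFDerivAt.comp_hasDerivAt t h1
      rw [hg]
      simp only [haff t]
      exact h2.congr_deriv rfl |>.congr_of_eventuallyEq (by
        filter_upwards with s
        simp [Function.comp, haff s])
    have hii : IntervalIntegrable (fun t => g (i.insertNth t y)) volume 0 (2*π) :=
      (hcont.comp (Continuous.finInsertNth i continuous_id continuous_const)).intervalIntegrable 0 (2*π)
    rw [intervalIntegral.integral_eq_sub_of_hasDerivAt hder hii, haff (2*π), hper, sub_self]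
  simp only [hinner, integral_zero]
/-- Lemma A: the box integral of a directional derivative of a periodic `C²` function vanishes. -/
lemma integral_box_fderiv_zero {u : (Fin d → ℝ) → ℝ} (hu : ContDiff ℝ 2 u)
    (hper : ∀ (α : Fin d → ℝ) (i : Fin d), u (α + (2 * π) • (Pi.single i 1 : Fin d → ℝ)) = u α)
    (v : Fin d → ℝ) :
    ∫ α in box15 d, fderiv ℝ u α v = 0 := by
  have hpt : ∀ α, fderiv ℝ u α v = ∑ i, v i * fderiv ℝ u α (Pi.single i 1) := by
    intro α
    conv_lhs => rw [← Finset.univ_sum_single v]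
    rw [map_sum]
    refine Finset.sum_congr rfl fun i _ => ?_
    have : (Pi.single i (v i) : Fin d → ℝ) = v i • (Pi.single i 1 : Fin d → ℝ) := by
      rw [← Pi.single_smul, smul_eq_mul, mul_one]
    rw [this, (fderiv ℝ u α).map_smul, smul_eq_mul]
  simp only [hpt]
  have hcont : ∀ i : Fin d, Continuous fun α => fderiv ℝ u α (Pi.single i 1) := fun i =>
    ((hu.fderiv_right (m := 1) (by norm_num)).continuous).clm_apply continuous_const
  rw [integral_finset_sum _ fun i _ => (intOn15 (g := fun α => v i * fderiv ℝ u α (Pi.single i 1)) (continuous_const.mul (hcont i)))]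
  refine Finset.sum_eq_zero fun i _ => ?_
  rw [integral_const_mul, integral_box_fderiv_single hu hper i, mul_zero]

/-- Lemma B: differentiation under the integral sign over the box. -/
lemma hasFDerivAt_intBox {G : (Fin d → ℝ) × (Fin r → ℝ) → ℝ} (hG : ContDiff ℝ 2 G)
    (β₀ : Fin r → ℝ) :
    HasFDerivAt (fun β => ∫ α in box15 d, G (α, β))
      (∫ α in box15 d, (fderiv ℝ G (α, β₀)).comp (ContinuousLinearMap.inr ℝ _ _)) β₀ := by
  have hGc : Continuous G := hG.continuous
  have hGd : Differentiable ℝ G := hG.differentiable (by norm_num)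
  have hG' : Continuous (fderiv ℝ G) := (hG.fderiv_right (m := 1) (by norm_num)).continuous
  obtain ⟨C, hC⟩ := (isCompact_Icc.prod (isCompact_closedBall β₀ 1)).exists_bound_of_continuousOn
    (f := fun p : (Fin d → ℝ) × (Fin r → ℝ) =>
      (fderiv ℝ G p).comp (ContinuousLinearMap.inr ℝ (Fin d → ℝ) (Fin r → ℝ)))
    ((hG'.clm_comp continuous_const).continuousOn)
  refine hasFDerivAt_integral_of_dominated_of_fderiv_le (𝕜 := ℝ)
    (F' := fun β α => (fderiv ℝ G (α, β)).comp (ContinuousLinearMap.inr ℝ _ _))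
    (bound := fun _ => C) (Metric.ball_mem_nhds β₀ one_pos) ?_ ?_ ?_ ?_ ?_ ?_
  · filter_upwards with β
    exact (hGc.comp (continuous_id.prodMk continuous_const)).aestronglyMeasurable
  · exact intOn15 (hGc.comp (continuous_id.prodMk continuous_const))
  · exact (((hG'.comp (continuous_id.prodMk continuous_const)).clm_comp
      continuous_const)).aestronglyMeasurable
  · refine (ae_restrict_iff' box15_meas).2 (ae_of_all _ fun α hα β hβ => ?_)
    exact hC (α, β) ⟨box15_subset_Icc hα, Metric.ball_subset_closedBall hβ⟩
  · exact integrableOn_const box15_vol_lt_top.ne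
  · refine ae_of_all _ fun α β _ => ?_
    exact ((hGd (α, β)).hasFDerivAt).comp β (hasFDerivAt_prodMk_right α β)

lemma fderiv_intBox_apply {G : (Fin d → ℝ) × (Fin r → ℝ) → ℝ} (hG : ContDiff ℝ 2 G)
    (β₀ : Fin r → ℝ) (v : Fin r → ℝ) :
    fderiv ℝ (fun β => ∫ α in box15 d, G (α, β)) β₀ v
      = ∫ α in box15 d, fderiv ℝ G (α, β₀) (0, v) := by
  rw [(hasFDerivAt_intBox hG β₀).fderiv]
  have hG' : Continuous (fderiv ℝ G) := (hG.fderiv_right (m := 1) (by norm_num)).continuous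
  rw [ContinuousLinearMap.integral_apply
    (φ := fun α => (fderiv ℝ G (α, β₀)).comp (ContinuousLinearMap.inr ℝ (Fin d → ℝ) (Fin r → ℝ)))
    (intOn15 ((hG'.comp (continuous_id.prodMk continuous_const)).clm_comp continuous_const))]
  exact setIntegral_congr_fun box15_meas fun α _ => rfl
end Aux15

/-- for a smooth zero-average periodic `b(·,β₀)` solving the range
equation, the averaged force equals the gradient of the averaged Lagrangian:
`∂_{β₀} L(β₀) = [ε ∂_β f(·, β₀ + b(·,β₀))]₀`. -/
theorem averaged_lagrangian_gradient {d r : ℕ} (ω : Fin d → ℝ) (ε : ℝ)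
    (f : (Fin d → ℝ) → (Fin r → ℝ) → ℝ)
    (b : (Fin d → ℝ) → (Fin r → ℝ) → (Fin r → ℝ))
    (hf : ContDiff ℝ (⊤ : ℕ∞) (Function.uncurry f))
    (hb : ContDiff ℝ (⊤ : ℕ∞) (Function.uncurry b))
    (hfper : ∀ (α : Fin d → ℝ) (β : Fin r → ℝ) (i : Fin d),
      f (α + (2 * π) • (Pi.single i 1 : Fin d → ℝ)) β = f α β)
    (hbper : ∀ (α : Fin d → ℝ) (β₀ : Fin r → ℝ) (i : Fin d),
      b (α + (2 * π) • (Pi.single i 1 : Fin d → ℝ)) β₀ = b α β₀)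
    (hbavg : ∀ (β₀ : Fin r → ℝ) (j : Fin r), torusAvg (fun α => b α β₀ j) = 0)
    (hrange : ∀ (α : Fin d → ℝ) (β₀ : Fin r → ℝ) (j : Fin r),
      dirDeriv ω (dirDeriv ω (fun α' => b α' β₀ j)) α
        + ε * (gradBeta f j α (β₀ + b α β₀)
          - torusAvg (fun α' => gradBeta f j α' (β₀ + b α' β₀))) = 0) :
    ∀ (β₀ : Fin r → ℝ) (j : Fin r),
      fderiv ℝ
        (fun β₀' => torusAvg fun α =>
          -(1 / 2) * ∑ k, (dirDeriv ω (fun α' => b α' β₀' k) α) ^ 2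
            + ε * f α (β₀' + b α β₀'))
        β₀ (Pi.single j 1 : Fin r → ℝ)
      = ε * torusAvg (fun α => gradBeta f j α (β₀ + b α β₀)) := by
  classical
  intro β₀ j
  -- abbreviations
  set E : Fin r → ℝ := Pi.single j 1 with hE
  set bv : (Fin d → ℝ) × (Fin r → ℝ) → (Fin r → ℝ) := fun p => b p.1 p.2 with hbv
  set F : (Fin d → ℝ) × (Fin r → ℝ) → ℝ := fun p => f p.1 p.2 with hF
  set Bk : Fin r → ((Fin d → ℝ) × (Fin r → ℝ) → ℝ) := fun k p => b p.1 p.2 k with hBkdef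
  have hbvs : ContDiff ℝ (⊤ : ℕ∞) bv := hb
  have hFs : ContDiff ℝ (⊤ : ℕ∞) F := hf
  have hBks : ∀ k, ContDiff ℝ (⊤ : ℕ∞) (Bk k) :=
    fun k => (ContinuousLinearMap.proj (R := ℝ) (φ := fun _ : Fin r => ℝ) k).contDiff.comp hbvs
  have hBkd : ∀ k, Differentiable ℝ (Bk k) := fun k => (hBks k).differentiable (by simp)
  have hFd : Differentiable ℝ F := hFs.differentiable (by simp)
  have hbvd : Differentiable ℝ bv := hbvs.differentiable (by simp)
  -- first derivatives in p of Bk, applied to fixed vectors, are C³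
  have hHw : ∀ (k : Fin r) (u : (Fin d → ℝ) × (Fin r → ℝ)),
      ContDiff ℝ 3 (fun p => fderiv ℝ (Bk k) p u) :=
    fun k u => ((hBks k).fderiv_right (m := 3) (by exact WithTop.coe_le_coe.2 le_top)).clm_apply contDiff_const
  have hfdBkd : ∀ k, Differentiable ℝ (fderiv ℝ (Bk k)) :=
    fun k => ((hBks k).fderiv_right (m := 1) (by exact WithTop.coe_le_coe.2 le_top)).differentiable (by norm_num)
  -- periodicity of the derivatives of Bk
  have hper' : ∀ (k : Fin r) (i : Fin d) (p : (Fin d → ℝ) × (Fin r → ℝ)),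
      fderiv ℝ (Bk k) (p + ((2 * π) • (Pi.single i 1 : Fin d → ℝ), 0)) = fderiv ℝ (Bk k) p := by
    intro k i p
    rw [← fderiv_shift15 (hBkd k) ((2 * π) • (Pi.single i 1 : Fin d → ℝ), 0) p]
    congr 1
    funext q
    show b (q.1 + (2 * π) • (Pi.single i 1 : Fin d → ℝ)) (q.2 + 0) k = b q.1 q.2 k
    rw [add_zero, hbper]
  -- the functions of α
  set Wk : Fin r → (Fin d → ℝ) → ℝ := fun k α => fderiv ℝ (Bk k) (α, β₀) (ω, 0) with hWk
  set Ck : Fin r → (Fin d → ℝ) → ℝ := fun k α => fderiv ℝ (Bk k) (α, β₀) (0, E) with hCk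
  set gk : Fin r → (Fin d → ℝ) → ℝ := fun k α => gradBeta f k α (β₀ + b α β₀) with hgk
  set Mk : Fin r → (Fin d → ℝ) → ℝ :=
    fun k α => fderiv ℝ (fun p => fderiv ℝ (Bk k) p (ω, 0)) (α, β₀) (0, E) with hMk
  -- smoothness of these
  have hWks : ∀ k, ContDiff ℝ 2 (Wk k) := fun k =>
    ((hHw k (ω, 0)).of_le (by norm_num)).comp (contDiff_id.prodMk contDiff_const)
  have hCks : ∀ k, ContDiff ℝ 2 (Ck k) := fun k =>
    ((hHw k (0, E)).of_le (by norm_num)).comp (contDiff_id.prodMk contDiff_const)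
  have hMkc : ∀ k, Continuous (Mk k) := fun k =>
    ((((hHw k (ω, 0)).fderiv_right (m := 1) (by norm_num)).continuous).clm_apply
      continuous_const).comp (continuous_id.prodMk continuous_const)
  have hgkc : ∀ k, Continuous (gk k) := by
    intro k
    have h1 : ∀ α, gk k α = fderiv ℝ F (α, β₀ + b α β₀) (0, Pi.single k 1) := by
      intro α
      rw [hgk]
      exact fderiv_partial_snd hFd α (β₀ + b α β₀) (Pi.single k 1)
    rw [show gk k = fun α => fderiv ℝ F (α, β₀ + b α β₀) (0, Pi.single k 1) from funext h1]
    exact (((hFs.fderiv_right (m := 1) (by exact WithTop.coe_le_coe.2 le_top)).continuous).clm_apply continuous_const).comp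
      (continuous_id.prodMk (continuous_const.add
        ((hbvs.continuous).comp (continuous_id.prodMk continuous_const))))
  -- gk via the full derivative
  have hgkF : ∀ k α, gk k α = fderiv ℝ F (α, β₀ + b α β₀) (0, Pi.single k 1) :=
    fun k α => fderiv_partial_snd hFd α (β₀ + b α β₀) (Pi.single k 1)
  -- (P1) dirDeriv = Wk
  have hP1 : ∀ (k : Fin r) (β : Fin r → ℝ) (α : Fin d → ℝ),
      dirDeriv ω (fun α' => b α' β k) α = fderiv ℝ (Bk k) (α, β) (ω, 0) := by
    intro k β α
    exact fderiv_partial_fst (hBkd k) α β ω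
  -- (P2) the range equation in terms of Wk
  have hP2 : ∀ (k : Fin r) (α : Fin d → ℝ),
      fderiv ℝ (Wk k) α ω = -(ε * (gk k α - torusAvg (gk k))) := by
    intro k α
    have h0 := hrange α β₀ k
    have h1 : dirDeriv ω (fun α' => b α' β₀ k) = Wk k := funext fun α' => hP1 k β₀ α'
    rw [h1] at h0
    have h2 : dirDeriv ω (Wk k) α = fderiv ℝ (Wk k) α ω := rfl
    rw [h2] at h0
    have h3 : torusAvg (fun α' => gradBeta f k α' (β₀ + b α' β₀)) = torusAvg (gk k) := rfl
    rw [h3] at h0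
    linarith
  -- fderiv of Wk, Ck in direction ω, as full derivatives
  have hWkfull : ∀ k α, fderiv ℝ (Wk k) α ω
      = fderiv ℝ (fun p => fderiv ℝ (Bk k) p (ω, 0)) (α, β₀) (ω, 0) :=
    fun k α => fderiv_partial_fst ((hHw k (ω, 0)).differentiable (by norm_num)) α β₀ ω
  have hCkfull : ∀ k α, fderiv ℝ (Ck k) α ω
      = fderiv ℝ (fun p => fderiv ℝ (Bk k) p (0, E)) (α, β₀) (ω, 0) :=
    fun k α => fderiv_partial_fst ((hHw k (0, E)).differentiable (by norm_num)) α β₀ ω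
  -- (P4) symmetry of second derivatives : fderiv (Ck k) α ω = Mk k α
  have hP4 : ∀ k α, fderiv ℝ (Ck k) α ω = Mk k α := by
    intro k α
    rw [hCkfull k α]
    show fderiv ℝ (fun p => fderiv ℝ (Bk k) p (0, E)) (α, β₀) (ω, 0)
        = fderiv ℝ (fun p => fderiv ℝ (Bk k) p (ω, 0)) (α, β₀) (0, E)
    rw [fderiv_fderiv_apply (hfdBkd k) (α, β₀) (0, E) (ω, 0),
      fderiv_fderiv_apply (hfdBkd k) (α, β₀) (ω, 0) (0, E)]
    exact ((hBks k).contDiffAt.isSymmSndFDerivAt (by simp; exact WithTop.coe_le_coe.2 (le_top : (2 : ℕ∞) ≤ ⊤))).eq (ω, 0) (0, E)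
  -- (P3) integration by parts
  have hP3 : ∀ k, ∫ α in box15 d, Wk k α * Mk k α
      = - ∫ α in box15 d, fderiv ℝ (Wk k) α ω * Ck k α := by
    intro k
    have hu : ContDiff ℝ 2 (fun α => Wk k α * Ck k α) := (hWks k).mul (hCks k)
    have hperu : ∀ (α : Fin d → ℝ) (i : Fin d),
        (fun α => Wk k α * Ck k α) (α + (2 * π) • (Pi.single i 1 : Fin d → ℝ))
          = (fun α => Wk k α * Ck k α) α := by
      intro α i
      have hprod : ((α + (2 * π) • (Pi.single i 1 : Fin d → ℝ)), β₀)
          = (α, β₀) + ((2 * π) • (Pi.single i 1 : Fin d → ℝ), 0) := by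
        simp [Prod.ext_iff]
      simp only [hWk, hCk, hprod, hper' k i (α, β₀)]
    have h0 := integral_box_fderiv_zero hu hperu ω
    have hpt : ∀ α, fderiv ℝ (fun α => Wk k α * Ck k α) α ω
        = fderiv ℝ (Wk k) α ω * Ck k α + Wk k α * Mk k α := by
      intro α
      have hW : HasFDerivAt (Wk k) (fderiv ℝ (Wk k) α) α :=
        (((hWks k).differentiable (by norm_num)) α).hasFDerivAt
      have hC : HasFDerivAt (Ck k) (fderiv ℝ (Ck k) α) α :=
        (((hCks k).differentiable (by norm_num)) α).hasFDerivAt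
      have hWC : HasFDerivAt (fun α => Wk k α * Ck k α)
          (Wk k α • fderiv ℝ (Ck k) α + Ck k α • fderiv ℝ (Wk k) α) α := hW.mul hC
      rw [hWC.fderiv]
      simp only [ContinuousLinearMap.add_apply, ContinuousLinearMap.smul_apply, smul_eq_mul]
      rw [hP4 k α]
      ring
    rw [show (fun α => fderiv ℝ (fun α => Wk k α * Ck k α) α ω)
        = fun α => fderiv ℝ (Wk k) α ω * Ck k α + Wk k α * Mk k α from funext hpt] at h0
    have hi1 : IntegrableOn (fun α => fderiv ℝ (Wk k) α ω * Ck k α) (box15 d) := by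
      have hc1 : Continuous fun α => fderiv ℝ (Wk k) α ω :=
        (((hWks k).fderiv_right (m := 1) (by norm_num)).continuous).clm_apply continuous_const
      exact intOn15 (hc1.mul ((hCks k).continuous))
    have hi2 : IntegrableOn (fun α => Wk k α * Mk k α) (box15 d) :=
      intOn15 (((hWks k).continuous).mul (hMkc k))
    rw [integral_add hi1 hi2] at h0
    linarith
  -- (P5) ∫ Ck = 0
  have hP5 : ∀ k, ∫ α in box15 d, Ck k α = 0 := by
    intro k
    have h1 := fderiv_intBox_apply ((hBks k).of_le (by exact WithTop.coe_le_coe.2 le_top)) β₀ E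
    have h2 : (fun β => ∫ α in box15 d, Bk k (α, β)) = fun _ => (0 : ℝ) := by
      funext β
      have h3 := hbavg β k
      unfold torusAvg at h3
      have h4 : ((2 * π) ^ d : ℝ)⁻¹ ≠ 0 := by positivity
      have := mul_eq_zero.1 h3
      rcases this with h | h
      · exact absurd h h4
      · exact h
    rw [h2] at h1
    simp only [fderiv_fun_const] at h1
    rw [← h1]
    simp
  -- the full integrand
  set G : (Fin d → ℝ) × (Fin r → ℝ) → ℝ :=
    fun p => -(1/2 : ℝ) * ∑ k, (fderiv ℝ (Bk k) p (ω, 0)) * (fderiv ℝ (Bk k) p (ω, 0))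
      + ε * F (p.1, p.2 + bv p) with hGdef
  have hGs : ContDiff ℝ 2 G := by
    refine ContDiff.add ?_ ?_
    · exact contDiff_const.mul (ContDiff.sum fun k _ =>
        (((hHw k (ω, 0)).of_le (by norm_num)).mul ((hHw k (ω, 0)).of_le (by norm_num))))
    · exact contDiff_const.mul ((hFs.of_le (by exact WithTop.coe_le_coe.2 le_top)).comp
        (contDiff_fst.prodMk (contDiff_snd.add (hbvs.of_le (by exact WithTop.coe_le_coe.2 le_top)))))
  -- rewrite the Lagrangian
  have hLeq : (fun β' => torusAvg fun α =>
        -(1 / 2) * ∑ k, (dirDeriv ω (fun α' => b α' β' k) α) ^ 2 + ε * f α (β' + b α β'))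
      = fun β' => ((2 * π) ^ d : ℝ)⁻¹ * ∫ α in box15 d, G (α, β') := by
    funext β'
    unfold torusAvg
    congr 1
    refine setIntegral_congr_fun box15_meas fun α _ => ?_
    have h1 : ∑ k, (dirDeriv ω (fun α' => b α' β' k) α) ^ 2
        = ∑ k, (fderiv ℝ (Bk k) (α, β') (ω, 0)) * (fderiv ℝ (Bk k) (α, β') (ω, 0)) :=
      Finset.sum_congr rfl fun k _ => by rw [hP1 k β' α, pow_two]
    show -(1/2 : ℝ) * ∑ k, (dirDeriv ω (fun α' => b α' β' k) α) ^ 2 + ε * f α (β' + b α β')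
        = G (α, β')
    rw [h1]
  rw [hLeq]
  have hIder := hasFDerivAt_intBox hGs β₀
  rw [fderiv_const_mul hIder.differentiableAt (((2 * π) ^ d : ℝ)⁻¹)]
  simp only [ContinuousLinearMap.smul_apply, smul_eq_mul]
  rw [fderiv_intBox_apply hGs β₀ E]
  -- auxiliary vector expansion
  have hvec : ∀ (q : (Fin d → ℝ) × (Fin r → ℝ)) (w : Fin r → ℝ),
      fderiv ℝ F q ((0 : Fin d → ℝ), w) = ∑ k, w k * fderiv ℝ F q (0, Pi.single k 1) := by
    intro q w
    have hw : w = ∑ k, w k • (Pi.single k 1 : Fin r → ℝ) := by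
      conv_lhs => rw [← Finset.univ_sum_single w]
      exact Finset.sum_congr rfl fun k _ => by rw [← Pi.single_smul, smul_eq_mul, mul_one]
    have h1 : ((0 : Fin d → ℝ), w)
        = ∑ k, w k • (((0 : Fin d → ℝ), (Pi.single k 1 : Fin r → ℝ))) := by
      rw [Prod.ext_iff]
      refine ⟨?_, ?_⟩
      · rw [Prod.fst_sum]; simp
      · rw [Prod.snd_sum]; simpa using hw
    rw [h1, map_sum]
    refine Finset.sum_congr rfl fun k _ => ?_
    rw [(fderiv ℝ F q).map_smul, smul_eq_mul]
  -- components of the vector derivative of bv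
  have hcomp : ∀ (k : Fin r) (u : (Fin d → ℝ) × (Fin r → ℝ)) (p : (Fin d → ℝ) × (Fin r → ℝ)),
      fderiv ℝ (Bk k) p u = (fderiv ℝ bv p u) k := by
    intro k u p
    have h1 := (ContinuousLinearMap.proj (R := ℝ)
        (φ := fun _ : Fin r => ℝ) k).hasFDerivAt.comp p (hbvd p).hasFDerivAt
    have h2 : HasFDerivAt (Bk k)
        ((ContinuousLinearMap.proj (R := ℝ) (φ := fun _ : Fin r => ℝ) k).comp
          (fderiv ℝ bv p)) p := h1
    rw [h2.fderiv]
    rfl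
  -- pointwise value of the derivative of G in direction (0, E)
  have hDpt : ∀ α, fderiv ℝ G (α, β₀) (0, E)
      = (∑ k, -(Wk k α * Mk k α)) + ε * (gk j α + ∑ k, Ck k α * gk k α) := by
    intro α
    have hW1 : ∀ k : Fin r, HasFDerivAt (fun p => fderiv ℝ (Bk k) p (ω, 0))
        (fderiv ℝ (fun p => fderiv ℝ (Bk k) p (ω, 0)) (α, β₀)) (α, β₀) :=
      fun k => (((hHw k (ω, 0)).differentiable (by norm_num)) (α, β₀)).hasFDerivAt
    have hm : HasFDerivAt (fun p : (Fin d → ℝ) × (Fin r → ℝ) => (p.1, p.2 + bv p))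
        ((ContinuousLinearMap.fst ℝ _ _).prod
          (ContinuousLinearMap.snd ℝ _ _ + fderiv ℝ bv (α, β₀))) (α, β₀) :=
      hasFDerivAt_fst.prodMk (hasFDerivAt_snd.add (hbvd (α, β₀)).hasFDerivAt)
    have htG := ((HasFDerivAt.fun_sum
        (fun (k : Fin r) (_ : k ∈ Finset.univ) => (hW1 k).mul (hW1 k))).const_mul
          (-(1/2 : ℝ))).add
      (((hFd (α, β₀ + b α β₀)).hasFDerivAt.comp (α, β₀) hm).const_mul ε)
    have htG' : HasFDerivAt G
        ((-(1/2 : ℝ)) • (∑ k : Fin r,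
            ((fderiv ℝ (Bk k) (α, β₀) (ω, 0)) •
              fderiv ℝ (fun p => fderiv ℝ (Bk k) p (ω, 0)) (α, β₀)
            + (fderiv ℝ (Bk k) (α, β₀) (ω, 0)) •
              fderiv ℝ (fun p => fderiv ℝ (Bk k) p (ω, 0)) (α, β₀)))
          + ε • ((fderiv ℝ F (α, β₀ + b α β₀)).comp
            ((ContinuousLinearMap.fst ℝ _ _).prod
              (ContinuousLinearMap.snd ℝ _ _ + fderiv ℝ bv (α, β₀))))) (α, β₀) := htG
    rw [htG'.fderiv]
    simp only [ContinuousLinearMap.add_apply, ContinuousLinearMap.smul_apply,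
      ContinuousLinearMap.sum_apply, ContinuousLinearMap.coe_comp', Function.comp_apply,
      ContinuousLinearMap.prod_apply, ContinuousLinearMap.coe_fst', ContinuousLinearMap.coe_snd',
      smul_eq_mul]
    rw [hvec (α, β₀ + b α β₀) (E + fderiv ℝ bv (α, β₀) (0, E))]
    have e2 : ∀ k : Fin r,
        (E + fderiv ℝ bv (α, β₀) (0, E)) k * fderiv ℝ F (α, β₀ + b α β₀) (0, Pi.single k 1)
          = E k * gk k α + Ck k α * gk k α := by
      intro k
      rw [← hgkF k α, Pi.add_apply, ← hcomp k (0, E) (α, β₀)]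
      show (E k + Ck k α) * gk k α = E k * gk k α + Ck k α * gk k α
      ring
    rw [Finset.sum_congr rfl fun k _ => e2 k]
    have e4 : ∑ k : Fin r, (E k * gk k α + Ck k α * gk k α)
        = gk j α + ∑ k, Ck k α * gk k α := by
      rw [Finset.sum_add_distrib]
      congr 1
      rw [hE]
      simp [Pi.single_apply]
    rw [e4]
    show -(1/2 : ℝ) * (∑ k : Fin r, (Wk k α * Mk k α + Wk k α * Mk k α))
          + ε * (gk j α + ∑ k, Ck k α * gk k α)
        = (∑ k : Fin r, -(Wk k α * Mk k α)) + ε * (gk j α + ∑ k, Ck k α * gk k α)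
    rw [Finset.sum_add_distrib, Finset.sum_neg_distrib]
    ring
  -- now the integral bookkeeping
  have hCkc : ∀ k, Continuous (Ck k) := fun k => (hCks k).continuous
  have hWkc : ∀ k, Continuous (Wk k) := fun k => (hWks k).continuous
  have hDint : ∫ α in box15 d, fderiv ℝ G (α, β₀) (0, E)
      = ∫ α in box15 d,
          ((∑ k, -(Wk k α * Mk k α)) + ε * (gk j α + ∑ k, Ck k α * gk k α)) :=
    setIntegral_congr_fun box15_meas fun α _ => hDpt α
  rw [hDint]
  have hi1 : ∀ k : Fin r, IntegrableOn (fun α => -(Wk k α * Mk k α)) (box15 d) := fun k =>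
    intOn15 (((hWkc k).mul (hMkc k)).neg)
  have hi2 : ∀ k : Fin r, IntegrableOn (fun α => Ck k α * gk k α) (box15 d) := fun k =>
    intOn15 ((hCkc k).mul (hgkc k))
  have hiS1 : IntegrableOn (fun α => ∑ k, -(Wk k α * Mk k α)) (box15 d) :=
    integrable_finset_sum _ fun k _ => hi1 k
  have hic2 : Continuous (fun α => ε * (gk j α + ∑ k, Ck k α * gk k α)) :=
    continuous_const.mul ((hgkc j).add
      (continuous_finset_sum _ fun k _ => ((hCkc k).mul (hgkc k))))
  rw [integral_add hiS1 (intOn15 hic2), integral_finset_sum _ fun k _ => hi1 k]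
  have hk1 : ∀ k : Fin r, ∫ α in box15 d, -(Wk k α * Mk k α)
      = -(ε * ∫ α in box15 d, Ck k α * gk k α) := by
    intro k
    rw [integral_neg, hP3 k, neg_neg]
    have e1 : ∀ α, fderiv ℝ (Wk k) α ω * Ck k α
        = ε * (torusAvg (gk k) * Ck k α) + -(ε * (Ck k α * gk k α)) := by
      intro α; rw [hP2 k α]; ring
    rw [setIntegral_congr_fun box15_meas fun α _ => e1 α]
    rw [integral_add (intOn15 (g := fun x => ε * (torusAvg (gk k) * Ck k x)) (continuous_const.mul (continuous_const.mul (hCkc k))))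
      (intOn15 (g := fun x => -(ε * (Ck k x * gk k x))) ((continuous_const.mul ((hCkc k).mul (hgkc k))).neg))]
    rw [integral_neg, integral_const_mul, integral_const_mul, integral_const_mul, hP5 k]
    ring
  rw [Finset.sum_congr rfl fun k _ => hk1 k]
  rw [integral_const_mul, integral_add (intOn15 (hgkc j))
    (integrable_finset_sum _ fun k _ => hi2 k),
    integral_finset_sum _ fun k _ => hi2 k]
  have hsum : (∑ k : Fin r, -(ε * ∫ α in box15 d, Ck k α * gk k α))
      = -(ε * ∑ k : Fin r, ∫ α in box15 d, Ck k α * gk k α) := by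
    rw [Finset.sum_neg_distrib, Finset.mul_sum]
  rw [hsum]
  have hfin : ε * torusAvg (fun α => gradBeta f j α (β₀ + b α β₀))
      = ε * (((2 * π) ^ d : ℝ)⁻¹ * ∫ α in box15 d, gk j α) := rfl
  rw [hfin]
  ring
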